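/- Let ρ be a density matrix on ℂᴹ⊗ℂᴺ with sorted eigenvalue vector λ and let λ' be the sorted eigenvalue vector of ρ^{τ_B}. Then for every zero-discord state σ, ‖ρ − σ‖₂² ≥ (1/2)(‖λ − μ‖₂² + ‖λ' − μ‖₂²), where μ is the sorted eigenvalue vector of σ. -/

import Mathlib

open Matrix Kronecker ComplexOrder

/-- Partial transpose on the second tensor factor. -/
def ptB {m n : ℕ} (X : Matrix (Fin m × Fin n) (Fin m × Fin n) ℂ) :
    Matrix (Fin m × Fin n) (Fin m × Fin n) ℂ :=
  fun p q => X (p.1, q.2) (q.1, p.2)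

/-- Outer product |v⟩⟨v|. -/
noncomputable def outer {n : Type*} (v : n → ℂ) : Matrix n n ℂ :=
  Matrix.vecMulVec v (fun j => star (v j))

/-!
Hoffman–Wielandt: if `A = U diag(a) U*` and `B = V diag(b) V*` with `a`, `b` similarly ordered,
then `‖A - B‖₂² = ‖a‖² + ‖b‖² - 2 a ⬝ (S b)`, where `S = (|(U* V)ᵢⱼ|²)` is doubly stochastic, and
`a ⬝ (S b) ≤ a ⬝ b` by Birkhoff's theorem and the rearrangement inequality.

Apply this to `(ρ, σ)` and to `(ρ^{τ_B}, σ^{τ_B})`. The partial transpose preserves `‖·‖₂`, and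
for a zero-discord `σ = Σ pₖ |eₖ⟩⟨eₖ| ⊗ τₖ` the block unitary `W = Σ |eₖ⟩⟨eₖ| ⊗ Cₖ`, where
`Cₖ τₖ Cₖ* = τₖᵀ`, gives `σ^{τ_B} = W σ W*`; so `σ^{τ_B}` has the same sorted spectrum `μ` as `σ`.
Averaging the two inequalities gives the claim.
-/

theorem Monovary.dotProduct_mulVec_le_of_mem_doublyStochastic {ι : Type*} [Fintype ι]
    [DecidableEq ι] {a b : ι → ℝ} (hab : Monovary a b) {S : Matrix ι ι ℝ}
    (hS : S ∈ doublyStochastic ℝ ι) : a ⬝ᵥ (S *ᵥ b) ≤ a ⬝ᵥ b := by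
  obtain ⟨w, hw0, hw1, rfl⟩ := exists_eq_sum_perm_of_mem_doublyStochastic hS
  calc a ⬝ᵥ ((∑ π, w π • π.permMatrix ℝ) *ᵥ b) = ∑ π, w π * ∑ i, a i * b (π i) := by
        simp only [sum_mulVec, dotProduct_sum, smul_mulVec, dotProduct_smul, permMatrix_mulVec]
        rfl
    _ ≤ ∑ π, w π * ∑ i, a i * b i :=
        Finset.sum_le_sum fun π _ =>
          mul_le_mul_of_nonneg_left hab.sum_mul_comp_perm_le_sum_mul (hw0 π)
    _ = a ⬝ᵥ b := by rw [← Finset.sum_mul, hw1, one_mul, dotProduct]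

theorem Matrix.sum_sq_norm_eq_re_trace_mul_conjTranspose {m n : Type*} [Fintype m] [Fintype n]
    (X : Matrix m n ℂ) : ∑ i, ∑ j, ‖X i j‖ ^ 2 = (X * Xᴴ).trace.re := by
  simp [trace, mul_apply, Complex.mul_conj, Complex.sq_norm, Complex.re_sum]

section HoffmanWielandt

variable {ι : Type*} [Fintype ι] [DecidableEq ι]

theorem Matrix.map_normSq_mem_doublyStochastic {W : Matrix ι ι ℂ} (hW : W ∈ unitaryGroup ι ℂ) :
    W.map Complex.normSq ∈ doublyStochastic ℝ ι := by
  refine mem_doublyStochastic_iff_sum.mpr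
    ⟨fun i j => Complex.normSq_nonneg _, fun i => ?_, fun j => ?_⟩
  · have hii := congr_fun₂ (mem_unitaryGroup_iff.mp hW) i i
    simp only [mul_apply, star_apply, Complex.star_def, Complex.mul_conj, one_apply_eq] at hii
    exact_mod_cast hii
  · have hjj := congr_fun₂ (mem_unitaryGroup_iff'.mp hW) j j
    simp only [mul_apply, star_apply, Complex.star_def, mul_comm (starRingEnd ℂ _),
      Complex.mul_conj, one_apply_eq] at hjj
    exact_mod_cast hjj

theorem Matrix.trace_diagonal_mul_conj_diagonal (W : Matrix ι ι ℂ) (a b : ι → ℝ) :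
    (diagonal (RCLike.ofReal ∘ a) * (W * diagonal (RCLike.ofReal ∘ b) * star W)).trace
      = ((a ⬝ᵥ (W.map Complex.normSq *ᵥ b) : ℝ) : ℂ) := by
  simp only [trace, diag_apply, diagonal_mul]
  simp only [mul_apply (M := W * _), mul_diagonal, star_apply, Complex.star_def, dotProduct,
    mulVec, map_apply, Complex.ofReal_sum, Complex.ofReal_mul, Finset.mul_sum, ← Complex.mul_conj]
  refine Finset.sum_congr rfl fun i _ => Finset.sum_congr rfl fun j _ => ?_
  simp only [Function.comp_apply, Complex.coe_algebraMap]
  ring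

theorem Matrix.trace_conj_diagonal_mul_conj_diagonal (U V : Matrix ι ι ℂ) (a b : ι → ℝ) :
    (U * diagonal (RCLike.ofReal ∘ a) * star U * (V * diagonal (RCLike.ofReal ∘ b) * star V)).trace
      = ((a ⬝ᵥ ((star U * V).map Complex.normSq *ᵥ b) : ℝ) : ℂ) := by
  rw [← trace_diagonal_mul_conj_diagonal, star_mul, star_star]
  simp only [mul_assoc]
  rw [trace_mul_comm U]
  simp only [mul_assoc]

theorem Matrix.trace_conj_diagonal_mul_self {U : Matrix ι ι ℂ} (hU : U ∈ unitaryGroup ι ℂ)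
    (a : ι → ℝ) :
    (U * diagonal (RCLike.ofReal ∘ a) * star U * (U * diagonal (RCLike.ofReal ∘ a) * star U)).trace
      = ((a ⬝ᵥ a : ℝ) : ℂ) := by
  rw [trace_conj_diagonal_mul_conj_diagonal, mem_unitaryGroup_iff'.mp hU,
    Matrix.map_one _ (map_zero _) (map_one _), one_mulVec]

theorem Matrix.isHermitian_conj_diagonal_ofReal (U : Matrix ι ι ℂ) (a : ι → ℝ) :
    (U * diagonal (RCLike.ofReal ∘ a) * star U).IsHermitian :=
  isHermitian_mul_mul_conjTranspose U <|
    isHermitian_diagonal_of_self_adjoint _ <| by ext i; simp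

theorem Matrix.hoffman_wielandt {U V : Matrix ι ι ℂ} (hU : U ∈ unitaryGroup ι ℂ)
    (hV : V ∈ unitaryGroup ι ℂ) {a b : ι → ℝ} (hab : Monovary a b) :
    ∑ i, (a i - b i) ^ 2 ≤ ∑ i, ∑ j,
      ‖(U * diagonal (RCLike.ofReal ∘ a) * star U - V * diagonal (RCLike.ofReal ∘ b) * star V :
        Matrix ι ι ℂ) i j‖ ^ 2 := by
  have hS := hab.dotProduct_mulVec_le_of_mem_doublyStochastic
    (map_normSq_mem_doublyStochastic (Submonoid.mul_mem _ (Unitary.star_mem hU) hV))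
  have hsq : ∑ i, (a i - b i) ^ 2 = a ⬝ᵥ a + b ⬝ᵥ b - 2 * (a ⬝ᵥ b) := by
    simp only [dotProduct, Finset.mul_sum, ← Finset.sum_add_distrib, ← Finset.sum_sub_distrib]
    exact Finset.sum_congr rfl fun i _ => by ring
  rw [sum_sq_norm_eq_re_trace_mul_conjTranspose,
    ((isHermitian_conj_diagonal_ofReal U a).sub (isHermitian_conj_diagonal_ofReal V b)).eq,
    sub_mul, mul_sub, mul_sub, trace_sub, trace_sub, trace_sub,
    trace_mul_comm (V * _ * _), trace_conj_diagonal_mul_self hU, trace_conj_diagonal_mul_self hV,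
    trace_conj_diagonal_mul_conj_diagonal]
  simp only [Complex.sub_re, Complex.ofReal_re]
  linarith

variable {n : Type*} [Fintype n] [DecidableEq n]

theorem Matrix.submatrix_conj_diagonal (U : Matrix n n ℂ) (d : n → ℂ) (e f : ι ≃ n) :
    (U * diagonal d * star U).submatrix e e
      = U.submatrix e f * diagonal (d ∘ f) * star (U.submatrix e f) := by
  rw [star_eq_conjTranspose, star_eq_conjTranspose, conjTranspose_submatrix,
    ← submatrix_diagonal_equiv, submatrix_mul_equiv, submatrix_mul_equiv]

theorem Matrix.submatrix_mem_unitaryGroup {U : Matrix n n ℂ} (hU : U ∈ unitaryGroup n ℂ)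
    (e f : ι ≃ n) : U.submatrix e f ∈ unitaryGroup ι ℂ := by
  rw [mem_unitaryGroup_iff, star_eq_conjTranspose, conjTranspose_submatrix, submatrix_mul_equiv,
    ← star_eq_conjTranspose, mem_unitaryGroup_iff.mp hU, submatrix_one_equiv]

theorem Matrix.hoffman_wielandt_of_eq_conj {A B U V : Matrix n n ℂ} (hU : U ∈ unitaryGroup n ℂ)
    (hV : V ∈ unitaryGroup n ℂ) {α β : n → ℝ}
    (hA : A = U * diagonal (RCLike.ofReal ∘ α) * star U)
    (hB : B = V * diagonal (RCLike.ofReal ∘ β) * star V) (ea eb : ι ≃ n)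
    (hαβ : Monovary (α ∘ ea) (β ∘ eb)) :
    ∑ i, ((α ∘ ea) i - (β ∘ eb) i) ^ 2 ≤ ∑ p, ∑ q, ‖(A - B) p q‖ ^ 2 := by
  have hw := hoffman_wielandt (submatrix_mem_unitaryGroup hU ea ea)
    (submatrix_mem_unitaryGroup hV ea eb) hαβ
  rw [← Function.comp_assoc, ← Function.comp_assoc, ← submatrix_conj_diagonal,
    ← submatrix_conj_diagonal, ← hA, ← hB] at hw
  refine hw.trans_eq ?_
  rw [← Equiv.sum_comp ea]
  exact Finset.sum_congr rfl fun p _ => Equiv.sum_comp ea (fun q => ‖(A - B) (ea p) q‖ ^ 2)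

end HoffmanWielandt

theorem Matrix.IsHermitian.exists_unitary_conj_eq_transpose {n : Type*} [Fintype n]
    [DecidableEq n] {A : Matrix n n ℂ} (hA : A.IsHermitian) :
    ∃ C ∈ unitaryGroup n ℂ, C * A * star C = Aᵀ := by
  set U : Matrix n n ℂ := ↑hA.eigenvectorUnitary
  set D : Matrix n n ℂ := diagonal (RCLike.ofReal ∘ hA.eigenvalues)
  have hU : U ∈ unitaryGroup n ℂ := hA.eigenvectorUnitary.2
  have hUbar : U.map star ∈ unitaryGroup n ℂ := map_star_mem_unitaryGroup_iff.mpr hU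
  have hUU : star U * U = 1 := mem_unitaryGroup_iff'.mp hU
  have hUt : Uᵀ = star (U.map star) := by ext; simp
  -- `Aᵀ = Ū D Ū*` diagonalises `Aᵀ` with the same `D`, so `Ū U*` conjugates `A` to `Aᵀ`.
  refine ⟨U.map star * star U, Submonoid.mul_mem _ hUbar (Unitary.star_mem hU), ?_⟩
  have hspec : A = U * D * star U := hA.spectral_theorem
  rw [hspec, star_mul, star_star, transpose_mul, transpose_mul, diagonal_transpose, hUt]
  calc U.map star * star U * (U * D * star U) * (U * star (U.map star))
      = U.map star * (star U * U) * D * (star U * U) * star (U.map star) := by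
        simp only [mul_assoc]
    _ = (star U)ᵀ * (D * star (U.map star)) := by rw [hUU, mul_one, mul_one, mul_assoc]; rfl

theorem Matrix.sum_kronecker {κ l m n p α : Type*} [Fintype κ] [NonUnitalNonAssocSemiring α]
    (A : κ → Matrix l m α) (B : Matrix n p α) : (∑ k, A k) ⊗ₖ B = ∑ k, A k ⊗ₖ B := by
  ext
  simp [Matrix.sum_apply, Finset.sum_mul]

section BlockDiagonal

variable {κ m n : Type*} [Fintype κ] {P : κ → Matrix m m ℂ}

theorem sum_kronecker_mul_sum_kronecker [Fintype m] [Fintype n] [DecidableEq κ]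
    (hP : ∀ k l, P k * P l = if k = l then P k else 0) (X Y : κ → Matrix n n ℂ) :
    (∑ k, P k ⊗ₖ X k) * (∑ k, P k ⊗ₖ Y k) = ∑ k, P k ⊗ₖ (X k * Y k) := by
  simp only [Finset.sum_mul_sum, ← mul_kronecker_mul, hP]
  refine Finset.sum_congr rfl fun k _ => ?_
  rw [Finset.sum_eq_single k (fun l _ hl => by rw [if_neg (Ne.symm hl), zero_kronecker])
    (by simp), if_pos rfl]

theorem star_sum_kronecker (hPH : ∀ k, star (P k) = P k) (X : κ → Matrix n n ℂ) :
    star (∑ k, P k ⊗ₖ X k) = ∑ k, P k ⊗ₖ star (X k) := by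
  rw [star_sum]
  refine Finset.sum_congr rfl fun k _ => ?_
  rw [star_eq_conjTranspose, conjTranspose_kronecker, ← star_eq_conjTranspose (P k), hPH]
  rfl

theorem sum_kronecker_mem_unitaryGroup [Fintype m] [Fintype n] [DecidableEq κ] [DecidableEq m]
    [DecidableEq n] (hP : ∀ k l, P k * P l = if k = l then P k else 0) (hPH : ∀ k, star (P k) = P k)
    (hP1 : ∑ k, P k = 1) {C : κ → Matrix n n ℂ} (hC : ∀ k, C k ∈ unitaryGroup n ℂ) :
    ∑ k, P k ⊗ₖ C k ∈ unitaryGroup (m × n) ℂ := by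
  rw [mem_unitaryGroup_iff, star_sum_kronecker hPH, sum_kronecker_mul_sum_kronecker hP]
  simp only [mem_unitaryGroup_iff.mp (hC _), ← sum_kronecker, hP1, one_kronecker_one]

theorem sum_kronecker_conj [Fintype m] [Fintype n] [DecidableEq κ]
    (hP : ∀ k l, P k * P l = if k = l then P k else 0)
    (hPH : ∀ k, star (P k) = P k) (C X : κ → Matrix n n ℂ) :
    (∑ k, P k ⊗ₖ C k) * (∑ k, P k ⊗ₖ X k) * star (∑ k, P k ⊗ₖ C k)
      = ∑ k, P k ⊗ₖ (C k * X k * star (C k)) := by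
  rw [star_sum_kronecker hPH, sum_kronecker_mul_sum_kronecker hP,
    sum_kronecker_mul_sum_kronecker hP]

end BlockDiagonal

theorem star_outer {n : Type*} (v : n → ℂ) : star (outer v) = outer v := by
  show star (vecMulVec v (star v)) = vecMulVec v (star v)
  rw [star_eq_conjTranspose, conjTranspose_vecMulVec, star_star]

section Orthonormal

variable {m : Type*} [Fintype m] {e : m → m → ℂ}

theorem outer_mul_outer [DecidableEq m]
    (horth : ∀ k l, ∑ i, star (e k i) * e l i = if k = l then 1 else 0) (k l : m) :
    outer (e k) * outer (e l) = if k = l then outer (e k) else 0 := by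
  show vecMulVec (e k) (star (e k)) * vecMulVec (e l) (star (e l)) = _
  rw [vecMulVec_mul_vecMulVec, show star (e k) ⬝ᵥ e l = _ from horth k l]
  split_ifs with h
  · rw [h, one_smul]; rfl
  · rw [zero_smul, vecMulVec_zero]

theorem sum_outer_eq_one [DecidableEq m]
    (horth : ∀ k l, ∑ i, star (e k i) * e l i = if k = l then 1 else 0) :
    ∑ k, outer (e k) = 1 := by
  -- `E` has the `eₖ` as columns: `E* E = 1` is orthonormality, and `E E* = 1` is completeness.
  let E : Matrix m m ℂ := of fun i k => e k i
  have hE : star E * E = 1 := by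
    ext k l
    simpa [mul_apply, one_apply, E] using horth k l
  rw [← mul_eq_one_comm.mp hE]
  ext i j
  simp [outer, mul_apply, Matrix.sum_apply, vecMulVec_apply, E]

end Orthonormal

theorem ptB_sub {m n : ℕ} (X Y : Matrix (Fin m × Fin n) (Fin m × Fin n) ℂ) :
    ptB (X - Y) = ptB X - ptB Y := rfl

theorem ptB_sum_kronecker {m n : ℕ} {κ : Type*} [Fintype κ] (A : κ → Matrix (Fin m) (Fin m) ℂ)
    (B : κ → Matrix (Fin n) (Fin n) ℂ) : ptB (∑ k, A k ⊗ₖ B k) = ∑ k, A k ⊗ₖ (B k)ᵀ := by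
  ext
  simp [ptB, Matrix.sum_apply]

theorem sum_sq_norm_ptB {m n : ℕ} (X : Matrix (Fin m × Fin n) (Fin m × Fin n) ℂ) :
    ∑ p, ∑ q, ‖ptB X p q‖ ^ 2 = ∑ p, ∑ q, ‖X p q‖ ^ 2 := by
  simp only [← Finset.sum_product', Finset.univ_product_univ]
  let swap : (Fin m × Fin n) × (Fin m × Fin n) ≃ (Fin m × Fin n) × (Fin m × Fin n) :=
    ⟨fun r => ((r.1.1, r.2.2), (r.2.1, r.1.2)), fun r => ((r.1.1, r.2.2), (r.2.1, r.1.2)),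
      fun _ => rfl, fun _ => rfl⟩
  exact Equiv.sum_comp swap (fun r => ‖X r.1 r.2‖ ^ 2)

theorem exists_unitary_ptB_eq_conj {M N : ℕ} (p : Fin M → ℝ) {e : Fin M → Fin M → ℂ}
    {τ : Fin M → Matrix (Fin N) (Fin N) ℂ}
    (horth : ∀ k l, ∑ i, star (e k i) * e l i = if k = l then 1 else 0)
    (hτ : ∀ k, (τ k).IsHermitian) :
    ∃ W ∈ unitaryGroup (Fin M × Fin N) ℂ,
      ptB (∑ k, (p k : ℂ) • (outer (e k) ⊗ₖ τ k))
        = W * (∑ k, (p k : ℂ) • (outer (e k) ⊗ₖ τ k)) * star W := by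
  choose C hC hCτ using fun k => (hτ k).exists_unitary_conj_eq_transpose
  refine ⟨∑ k, outer (e k) ⊗ₖ C k,
    sum_kronecker_mem_unitaryGroup (outer_mul_outer horth) (fun k => star_outer _)
      (sum_outer_eq_one horth) hC, ?_⟩
  simp only [← kronecker_smul]
  rw [sum_kronecker_conj (outer_mul_outer horth) (fun k => star_outer _), ptB_sum_kronecker]
  simp only [mul_smul_comm, smul_mul_assoc, hCτ, transpose_smul]

theorem stmt14_general {M N : ℕ} (ρ σ : Matrix (Fin M × Fin N) (Fin M × Fin N) ℂ)
    (hρ : ρ.PosSemidef) (hρ' : (ptB ρ).IsHermitian)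
    (hσH : σ.IsHermitian)
    -- σ is a zero-discord state:
    (p : Fin M → ℝ) (e : Fin M → (Fin M → ℂ)) (τ : Fin M → Matrix (Fin N) (Fin N) ℂ)
    (horth : ∀ k l, ∑ m, star (e k m) * e l m = if k = l then 1 else 0)
    (hτpsd : ∀ k, (τ k).PosSemidef)
    (hdecomp : σ = ∑ k, (p k : ℂ) • (outer (e k) ⊗ₖ τ k))
    -- sorted eigenvalue vectors of ρ, ρ^{τ_B}, σ:
    (lam lam' mu : Fin (M * N) → ℝ)
    (g g' gσ : Fin (M * N) ≃ Fin M × Fin N)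
    (hlam : lam = hρ.1.eigenvalues ∘ g) (hlam' : lam' = hρ'.eigenvalues ∘ g')
    (hmu : mu = hσH.eigenvalues ∘ gσ)
    (hlamSorted : Antitone lam) (hlam'Sorted : Antitone lam') (hmuSorted : Antitone mu) :
    (1 / 2) * (∑ i, (lam i - mu i) ^ 2 + ∑ i, (lam' i - mu i) ^ 2) ≤
      ∑ a, ∑ b, ‖(ρ - σ) a b‖ ^ 2 := by
  subst hlam hlam' hmu
  set V : Matrix (Fin M × Fin N) (Fin M × Fin N) ℂ := ↑hσH.eigenvectorUnitary
  have hσ : σ = V * diagonal (RCLike.ofReal ∘ hσH.eigenvalues) * star V := hσH.spectral_theorem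
  obtain ⟨W, hW, hWσ⟩ := exists_unitary_ptB_eq_conj p horth fun k => (hτpsd k).1
  rw [← hdecomp] at hWσ
  have hσ' : ptB σ = W * V * diagonal (RCLike.ofReal ∘ hσH.eigenvalues) * star (W * V) := by
    rw [hWσ, star_mul]
    conv_lhs => rw [hσ]
    simp only [mul_assoc]
  have h₁ := hoffman_wielandt_of_eq_conj hρ.1.eigenvectorUnitary.2 hσH.eigenvectorUnitary.2
    hρ.1.spectral_theorem hσ g gσ (hlamSorted.monovary hmuSorted)
  have h₂ := hoffman_wielandt_of_eq_conj hρ'.eigenvectorUnitary.2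
    (Submonoid.mul_mem _ hW hσH.eigenvectorUnitary.2) hρ'.spectral_theorem hσ' g' gσ
    (hlam'Sorted.monovary hmuSorted)
  rw [← ptB_sub, sum_sq_norm_ptB] at h₂
  linarith

theorem stmt14 {M N : ℕ} (ρ σ : Matrix (Fin M × Fin N) (Fin M × Fin N) ℂ)
    (hρ : ρ.PosSemidef) (hρtr : ρ.trace = 1) (hρ' : (ptB ρ).IsHermitian)
    (hσH : σ.IsHermitian)
    -- σ is a zero-discord state:
    (p : Fin M → ℝ) (e : Fin M → (Fin M → ℂ)) (τ : Fin M → Matrix (Fin N) (Fin N) ℂ)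
    (hp : ∀ k, 0 ≤ p k) (hpsum : ∑ k, p k = 1)
    (horth : ∀ k l, ∑ m, star (e k m) * e l m = if k = l then 1 else 0)
    (hτpsd : ∀ k, (τ k).PosSemidef) (hτtr : ∀ k, (τ k).trace = 1)
    (hdecomp : σ = ∑ k, (p k : ℂ) • (outer (e k) ⊗ₖ τ k))
    -- sorted eigenvalue vectors of ρ, ρ^{τ_B}, σ:
    (lam lam' mu : Fin (M * N) → ℝ)
    (g g' gσ : Fin (M * N) ≃ Fin M × Fin N)
    (hlam : lam = hρ.1.eigenvalues ∘ g) (hlam' : lam' = hρ'.eigenvalues ∘ g')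
    (hmu : mu = hσH.eigenvalues ∘ gσ)
    (hlamSorted : Antitone lam) (hlam'Sorted : Antitone lam') (hmuSorted : Antitone mu) :
    (1 / 2) * (∑ i, (lam i - mu i) ^ 2 + ∑ i, (lam' i - mu i) ^ 2) ≤
      ∑ a, ∑ b, ‖(ρ - σ) a b‖ ^ 2 :=
  stmt14_general ρ σ hρ hρ' hσH p e τ horth hτpsd hdecomp lam lam' mu g g' gσ hlam hlam' hmu
    hlamSorted hlam'Sorted hmuSorted
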